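/- Let d > 0, x̃₁ ≤ … ≤ x̃_M with x̃_M - x̃₁ < d/√3, and L(x) = ∑_m 1/((x - x̃_m)² + d²). Then L has a unique global maximizer over ℝ, which lies in [x̃₁, x̃_M]. -/

import Mathlib

/-!
Each summand `1 / ((x - c) ^ 2 + d ^ 2)` increases on `(-∞, c]`, decreases on `[c, ∞)`, and has
second derivative `(6 (x - c) ^ 2 - 2 d ^ 2) / ((x - c) ^ 2 + d ^ 2) ^ 3`, so it is strictly
concave on `[c - d / √3, c + d / √3]`. Summing, `L` increases left of `x̃₁`, decreases right of
`x̃_M`, and, because the spread is below `d / √3`, is strictly concave on `[x̃₁, x̃_M]`. A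
continuous function of this shape attains its maximum on the compact interval, that maximum is
global, and strict concavity makes it unique.
-/

open Set Finset

section FiniteSums

variable {ι α β : Type*} [AddCommMonoid β] [PartialOrder β] [IsOrderedCancelAddMonoid β]
  {s : Finset ι} {f : ι → α → β}

theorem Finset.strictMonoOn_sum [Preorder α] {t : Set α} (hs : s.Nonempty)
    (hf : ∀ i ∈ s, StrictMonoOn (f i) t) : StrictMonoOn (fun x => ∑ i ∈ s, f i x) t :=
  fun _ hx _ hy hxy => sum_lt_sum_of_nonempty hs fun i hi => hf i hi hx hy hxy

theorem Finset.strictAntiOn_sum [Preorder α] {t : Set α} (hs : s.Nonempty)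
    (hf : ∀ i ∈ s, StrictAntiOn (f i) t) : StrictAntiOn (fun x => ∑ i ∈ s, f i x) t :=
  fun _ hx _ hy hxy => sum_lt_sum_of_nonempty hs fun i hi => hf i hi hx hy hxy

theorem Finset.strictConcaveOn_sum {𝕜 : Type*} [Semiring 𝕜] [PartialOrder 𝕜]
    [AddCommMonoid α] [SMul 𝕜 α] [Module 𝕜 β] {t : Set α} (hs : s.Nonempty)
    (hf : ∀ i ∈ s, StrictConcaveOn 𝕜 t (f i)) :
    StrictConcaveOn 𝕜 t (fun x => ∑ i ∈ s, f i x) := by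
  obtain ⟨i₀, hi₀⟩ := hs
  refine ⟨(hf i₀ hi₀).1, fun x hx y hy hxy a b ha hb hab => ?_⟩
  simp only [smul_sum, ← sum_add_distrib]
  exact sum_lt_sum_of_nonempty ⟨i₀, hi₀⟩ fun i hi => (hf i hi).2 hx hy hxy ha hb hab

end FiniteSums

section Unimodal

variable {α β : Type*} [LinearOrder α] [Preorder β] {f : α → β} {a b y : α}

theorem mem_Icc_of_forall_le (hmono : StrictMonoOn f (Iic a)) (hanti : StrictAntiOn f (Ici b))
    (hy : ∀ x, f x ≤ f y) : y ∈ Icc a b := by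
  refine ⟨le_of_not_gt fun hya => ?_, le_of_not_gt fun hby => ?_⟩
  · exact (hmono hya.le self_mem_Iic hya).not_ge (hy a)
  · exact (hanti self_mem_Ici hby.le hby).not_ge (hy b)

theorem forall_le_of_isMaxOn_Icc (hmono : StrictMonoOn f (Iic a)) (hanti : StrictAntiOn f (Ici b))
    (hab : a ≤ b) (hy : IsMaxOn f (Icc a b) y) (x : α) : f x ≤ f y := by
  rcases lt_or_ge x a with hxa | hax
  · exact (hmono hxa.le self_mem_Iic hxa).le.trans (hy (left_mem_Icc.2 hab))
  rcases le_or_gt x b with hxb | hbx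
  · exact hy ⟨hax, hxb⟩
  · exact (hanti self_mem_Ici hbx.le hbx).le.trans (hy (right_mem_Icc.2 hab))

end Unimodal

theorem existsUnique_forall_le_of_strictConcaveOn_Icc {f : ℝ → ℝ} {a b : ℝ} (hab : a ≤ b)
    (hcont : ContinuousOn f (Icc a b)) (hmono : StrictMonoOn f (Iic a))
    (hanti : StrictAntiOn f (Ici b)) (hconc : StrictConcaveOn ℝ (Icc a b) f) :
    ∃! x₀, ∀ x, f x ≤ f x₀ := by
  obtain ⟨x₀, -, hx₀⟩ := isCompact_Icc.exists_isMaxOn (nonempty_Icc.2 hab) hcont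
  have hx₀_max := forall_le_of_isMaxOn_Icc hmono hanti hab hx₀
  refine ⟨x₀, hx₀_max, fun y hy => ?_⟩
  exact hconc.eq_of_isMaxOn (fun x _ => hy x) (fun x _ => hx₀_max x)
    (mem_Icc_of_forall_le hmono hanti hy) (mem_Icc_of_forall_le hmono hanti hx₀_max)

noncomputable def lorentzian (c d x : ℝ) : ℝ := 1 / ((x - c) ^ 2 + d ^ 2)

theorem hasDerivAt_sub_sq_add_sq (c d x : ℝ) :
    HasDerivAt (fun x => (x - c) ^ 2 + d ^ 2) (2 * (x - c)) x := by
  simpa using (((hasDerivAt_id x).sub_const c).pow 2).add_const (d ^ 2)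

section Lorentzian

variable {c d : ℝ}

theorem continuous_lorentzian (hd : d ≠ 0) : Continuous (lorentzian c d) :=
  continuous_const.div (by fun_prop) fun x => by positivity

theorem strictMonoOn_lorentzian (hd : d ≠ 0) : StrictMonoOn (lorentzian c d) (Iic c) := by
  intro x hx y hy hxy
  have : (y - c) ^ 2 < (x - c) ^ 2 := by nlinarith [mem_Iic.1 hx, mem_Iic.1 hy]
  exact one_div_lt_one_div_of_lt (by positivity) (by linarith)

theorem strictAntiOn_lorentzian (hd : d ≠ 0) : StrictAntiOn (lorentzian c d) (Ici c) := by
  intro x hx y hy hxy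
  have : (x - c) ^ 2 < (y - c) ^ 2 := by nlinarith [mem_Ici.1 hx, mem_Ici.1 hy]
  exact one_div_lt_one_div_of_lt (by positivity) (by linarith)

theorem hasDerivAt_lorentzian (hd : d ≠ 0) (x : ℝ) :
    HasDerivAt (lorentzian c d) (-2 * (x - c) / ((x - c) ^ 2 + d ^ 2) ^ 2) x := by
  have hq0 : (x - c) ^ 2 + d ^ 2 ≠ 0 := by positivity
  exact ((hasDerivAt_const x (1 : ℝ)).fun_div (hasDerivAt_sub_sq_add_sq c d x) hq0).congr_deriv
    (by ring)

theorem hasDerivAt_deriv_lorentzian (hd : d ≠ 0) (x : ℝ) :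
    HasDerivAt (deriv (lorentzian c d))
      ((6 * (x - c) ^ 2 - 2 * d ^ 2) / ((x - c) ^ 2 + d ^ 2) ^ 3) x := by
  have hderiv : deriv (lorentzian c d) = fun x => -2 * (x - c) / ((x - c) ^ 2 + d ^ 2) ^ 2 :=
    funext fun x => (hasDerivAt_lorentzian hd x).deriv
  have hnum : HasDerivAt (fun x => -2 * (x - c)) (-2) x := by
    simpa using ((hasDerivAt_id x).sub_const c).const_mul (-2 : ℝ)
  rw [hderiv]
  have hq0 : (x - c) ^ 2 + d ^ 2 ≠ 0 := by positivity
  refine (hnum.fun_div ((hasDerivAt_sub_sq_add_sq c d x).fun_pow 2)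
    (pow_ne_zero 2 hq0)).congr_deriv ?_
  field_simp
  ring

theorem strictConcaveOn_lorentzian (hd : 0 < d) :
    StrictConcaveOn ℝ (Icc (c - d / √3) (c + d / √3)) (lorentzian c d) := by
  refine strictConcaveOn_of_deriv2_neg (convex_Icc _ _)
    (continuous_lorentzian hd.ne').continuousOn fun x hx => ?_
  rw [interior_Icc] at hx
  rw [Function.iterate_succ_apply, Function.iterate_one,
    (hasDerivAt_deriv_lorentzian hd.ne' x).deriv]
  have hx' : |x - c| < d / √3 := abs_sub_lt_iff.2 ⟨by linarith [hx.2], by linarith [hx.1]⟩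
  have hsq : 3 * (x - c) ^ 2 < d ^ 2 := by
    have := (sq_lt_sq' (by linarith [abs_nonneg (x - c)]) hx')
    rw [sq_abs, div_pow, Real.sq_sqrt (by norm_num)] at this
    linarith
  exact div_neg_of_neg_of_pos (by linarith) (by positivity)

end Lorentzian

theorem stmt_6 (d : ℝ) (hd : 0 < d) (M : ℕ) (hM : 1 ≤ M)
    (xt : Fin M → ℝ) (hmono : Monotone xt)
    (hspread : xt ⟨M - 1, Nat.sub_lt hM one_pos⟩ - xt ⟨0, hM⟩ < d / Real.sqrt 3)
    (L : ℝ → ℝ) (hL : ∀ x, L x = ∑ m, 1 / ((x - xt m) ^ 2 + d ^ 2)) :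
    (∃! x₀ : ℝ, ∀ x, L x ≤ L x₀) ∧
    (∀ x₀ : ℝ, (∀ x, L x ≤ L x₀) →
      x₀ ∈ Set.Icc (xt ⟨0, hM⟩) (xt ⟨M - 1, Nat.sub_lt hM one_pos⟩)) := by
  set a := xt ⟨0, hM⟩
  set b := xt ⟨M - 1, Nat.sub_lt hM one_pos⟩
  have hxt : ∀ m, xt m ∈ Icc a b := fun m =>
    ⟨hmono (Fin.mk_le_of_le_val (Nat.zero_le _)),
      hmono (Fin.le_iff_val_le_val.2 (Nat.le_sub_one_of_lt m.isLt))⟩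
  have hL' : L = fun x => ∑ m, lorentzian (xt m) d x := funext hL
  have hne : (univ : Finset (Fin M)).Nonempty := ⟨⟨0, hM⟩, mem_univ _⟩
  have hmonoL : StrictMonoOn L (Iic a) := hL' ▸ strictMonoOn_sum hne fun m _ =>
    (strictMonoOn_lorentzian hd.ne').mono (Iic_subset_Iic.2 (hxt m).1)
  have hantiL : StrictAntiOn L (Ici b) := hL' ▸ strictAntiOn_sum hne fun m _ =>
    (strictAntiOn_lorentzian hd.ne').mono (Ici_subset_Ici.2 (hxt m).2)
  have hconcL : StrictConcaveOn ℝ (Icc a b) L := hL' ▸ strictConcaveOn_sum hne fun m _ =>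
    (strictConcaveOn_lorentzian hd).subset
      (Icc_subset_Icc (by linarith [(hxt m).2]) (by linarith [(hxt m).1])) (convex_Icc a b)
  have hcontL : Continuous L :=
    hL' ▸ continuous_finsetSum _ fun m _ => continuous_lorentzian hd.ne'
  exact ⟨existsUnique_forall_le_of_strictConcaveOn_Icc (hxt ⟨0, hM⟩).2 hcontL.continuousOn
    hmonoL hantiL hconcL, fun x₀ => mem_Icc_of_forall_le hmonoL hantiL⟩
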